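/- Let \(A(t) = \frac{(t-1)^2}{1-2t}\) as a formal power series over \(\mathbb{Q}\). For \(n \geq 1\) and \(1 \leq j \leq n+1\), the coefficient of \(t^{n-j+1}\) in \(\frac{j}{n+1} A(t)^{n+1}\) equals \(\frac{j}{n+1} \sum_{k=\lceil (n+j+1)/2 \rceil}^{n+1} \binom{n+1}{k} \binom{k-j-1}{2k-n-j-1} 2^{2k-n-j-1}\). -/

import Mathlib

/-!
Since `(t - 1)^2 = (1 - 2t) + t^2`, we have `A = 1 + t^2 G` with `G = 1/(1 - 2t) = ∑ 2^r t^r`.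
Expanding `A^N` by the binomial theorem, the coefficient of `t^m` in `(t^2 G)^i` is
`2^(m-2i) C(m-i-1, i-1)`, because `G^i` is the rescaling `t ↦ 2t` of `(1 - t)^(-i)`.
-/

/-- Binomial coefficient with integer arguments, defined to be 0 when the
lower index is negative or exceeds the upper index. -/
def binomZ (a b : ℤ) : ℚ :=
  if 0 ≤ b ∧ b ≤ a then (a.toNat.choose b.toNat : ℚ) else 0

/-- `A(t) = (t-1)^2/(1-2t)` as a formal power series over ℚ. -/
noncomputable def Ancp : PowerSeries ℚ :=
  (PowerSeries.X - 1) ^ 2 * (1 - 2 * PowerSeries.X)⁻¹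

open PowerSeries Finset

theorem PowerSeries.inv_one_sub_C_mul_X {K : Type*} [Field K] (a : K) :
    (1 - C a * X : K⟦X⟧)⁻¹ = rescale a (mk 1) := by
  rw [inv_eq_iff_mul_eq_one (by simp), ← rescale_X, ← map_one (rescale a), ← map_sub, ← map_mul,
    mk_one_mul_one_sub_eq_one, map_one]

lemma binomZ_eq_zero {a b : ℤ} (h : ¬(0 ≤ b ∧ b ≤ a)) : binomZ a b = 0 := if_neg h

lemma binomZ_natCast {a b : ℕ} (h : b ≤ a) : binomZ a b = a.choose b := by
  simp [binomZ, h]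

lemma Ancp_eq : Ancp = 1 + X ^ 2 * rescale (2 : ℚ) (mk 1) := by
  have hu : constantCoeff (1 - 2 * X : ℚ⟦X⟧) ≠ 0 := by simp
  rw [Ancp, show ((X : ℚ⟦X⟧) - 1) ^ 2 = (1 - 2 * X) + X ^ 2 by ring, add_mul,
    PowerSeries.mul_inv_cancel _ hu, ← inv_one_sub_C_mul_X, map_ofNat]

lemma coeff_X_sq_mul_rescale_pow {m : ℕ} (hm : 1 ≤ m) (i : ℕ) :
    coeff m ((X ^ 2 * rescale (2 : ℚ) (mk 1)) ^ i)
      = binomZ ((m : ℤ) - i - 1) (m - 2 * i) * (2 : ℚ) ^ ((m : ℤ) - 2 * i) := by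
  rcases i with _ | d
  · rw [pow_zero, coeff_one, if_neg (by omega), binomZ_eq_zero (by omega), zero_mul]
  rw [mul_pow, ← pow_mul, ← map_pow, mk_one_pow_eq_mk_choose_add, coeff_X_pow_mul']
  split_ifs with h
  · obtain ⟨r, rfl⟩ : ∃ r, m = 2 * (d + 1) + r := ⟨m - 2 * (d + 1), by omega⟩
    rw [coeff_rescale, coeff_mk, Nat.add_sub_cancel_left,
      show ((2 * (d + 1) + r : ℕ) : ℤ) - (d + 1 : ℕ) - 1 = (d + r : ℕ) by push_cast; ring,
      show ((2 * (d + 1) + r : ℕ) : ℤ) - 2 * (d + 1 : ℕ) = (r : ℕ) by push_cast; ring,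
      binomZ_natCast (by omega), zpow_natCast, Nat.choose_symm_add, mul_comm]
  · rw [binomZ_eq_zero (by omega), zero_mul]

lemma coeff_Ancp_pow {m : ℕ} (hm : 1 ≤ m) (N : ℕ) :
    coeff m (Ancp ^ N) = ∑ k ∈ range (N + 1), (N.choose k : ℚ) *
      binomZ ((m : ℤ) + k - N - 1) (m + 2 * k - 2 * N) * (2 : ℚ) ^ ((m : ℤ) + 2 * k - 2 * N) := by
  rw [Ancp_eq, add_pow, map_sum]
  refine sum_congr rfl fun k hk => ?_
  have hkN : k ≤ N := Nat.lt_succ_iff.mp (mem_range.mp hk)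
  rw [one_pow, one_mul, ← map_natCast (C (R := ℚ)), coeff_mul_C, coeff_X_sq_mul_rescale_pow hm,
    mul_comm, mul_assoc, Nat.cast_sub hkN]
  ring_nf

theorem stmt11_general (n j : ℕ) (hj2 : j ≤ n + 1) :
    (j : ℚ) / ((n : ℚ) + 1) * PowerSeries.coeff (R := ℚ) (n - j + 1) (Ancp ^ (n + 1))
      = (j : ℚ) / ((n : ℚ) + 1) *
        ∑ k ∈ Finset.Icc ((n + j + 2) / 2) (n + 1),
          (Nat.choose (n + 1) k : ℚ) *
            binomZ ((k : ℤ) - j - 1) (2 * k - n - j - 1) *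
            (2 : ℚ) ^ (2 * (k : ℤ) - n - j - 1) := by
  congr 1
  rw [coeff_Ancp_pow (by omega)]
  rcases hj2.lt_or_eq with hj | rfl
  · have hIcc : Icc ((n + j + 2) / 2) (n + 1) ⊆ range (n + 1 + 1) := by
      intro k
      simp only [mem_Icc, mem_range]
      omega
    rw [← sum_subset hIcc fun k _ hk => ?_]
    · refine sum_congr rfl fun k _ => ?_
      rw [show ((n - j + 1 : ℕ) : ℤ) = n + 1 - j by omega]
      push_cast
      ring_nf
    · simp only [mem_Icc, not_and_or, not_le] at hk
      rw [binomZ_eq_zero (by omega), mul_zero, zero_mul]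
  -- The truncated index `n - (n + 1) + 1` is `1`, not `0`: both sides vanish.
  · rw [sum_eq_zero fun k hk => ?_, sum_eq_zero fun k hk => ?_]
    · rw [mem_Icc] at hk
      rw [binomZ_eq_zero (by omega), mul_zero, zero_mul]
    · rw [mem_range] at hk
      rw [binomZ_eq_zero (by omega), mul_zero, zero_mul]

/-- For `n ≥ 1` and `1 ≤ j ≤ n+1`, the coefficient of `t^{n-j+1}` in
`(j/(n+1)) A(t)^{n+1}` equals
`(j/(n+1)) ∑_{k=⌈(n+j+1)/2⌉}^{n+1} C(n+1,k) C(k-j-1, 2k-n-j-1) 2^{2k-n-j-1}`. -/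
theorem stmt11 (n j : ℕ) (hn : 1 ≤ n) (hj1 : 1 ≤ j) (hj2 : j ≤ n + 1) :
    (j : ℚ) / ((n : ℚ) + 1) * PowerSeries.coeff (R := ℚ) (n - j + 1) (Ancp ^ (n + 1))
      = (j : ℚ) / ((n : ℚ) + 1) *
        ∑ k ∈ Finset.Icc ((n + j + 2) / 2) (n + 1),
          (Nat.choose (n + 1) k : ℚ) *
            binomZ ((k : ℤ) - j - 1) (2 * k - n - j - 1) *
            (2 : ℚ) ^ (2 * (k : ℤ) - n - j - 1) :=
  stmt11_general n j hj2
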